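/- arXiv:1804.06444 — 4 statements merged into one kernel-verified Lean document; each statement's English description precedes it below -/
import Mathlib

section
/- At every point x = (x₁,…,x_{2n},t) ∈ ℝ^{2n+1} with Σ(x) ≠ 0, the squared norm of the horizontal gradient of f = h^w satisfies ‖∇₀f‖² = α² c² h^{2w−1} Σ^{2k−1}. -/
/-!
Each `X_l` is a derivation, so `∇₀(h^w) = w h^{w-1} ∇₀h`. Writing `y_i = x_i - a_i`,
`z_i = x_{i+n} - a_{i+n}`, one finds `(X_i h, X_{i+n} h) = (A y_i + B z_i, A z_i - B y_i)` with
`A = 4kc²Σ^{2k-1}` and `B = 4kcΣ^{k-1}(t-s)`, so the pair is a rotation of `(y_i, z_i)` scaled by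
`√(A² + B²)`, and `‖∇₀h‖² = (A² + B²) Σ = 16k²c² Σ^{2k-1} h`. Finally `α = 4kw`.
-/

open MeasureTheory Real Filter

noncomputable section

/-- Points of `ℝ^{2n+1}`: the `2n` horizontal coordinates indexed by `Fin n ⊕ Fin n`
(`Sum.inl i` encodes the coordinate `x_i` for `1 ≤ i ≤ n`, and `Sum.inr i` encodes the
coordinate `x_{i+n}`), together with the vertical coordinate `t`. -/
abbrev Pt (n : ℕ) := ((Fin n ⊕ Fin n) → ℝ) × ℝ

/-- `Σ(x) = ∑_{l=1}^{2n} (x_l - a_l)²`. -/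
def Sg (n : ℕ) (a : Fin n ⊕ Fin n → ℝ) (x : Pt n) : ℝ :=
  ∑ l : Fin n ⊕ Fin n, (x.1 l - a l) ^ 2

/-- Partial derivative `∂u/∂x_l` in the `l`-th horizontal coordinate direction. -/
def pdx (n : ℕ) (l : Fin n ⊕ Fin n) (u : Pt n → ℝ) (x : Pt n) : ℝ :=
  fderiv ℝ u x (Pi.single l 1, 0)

/-- Partial derivative `∂u/∂t` in the vertical direction. -/
def pdt (n : ℕ) (u : Pt n → ℝ) (x : Pt n) : ℝ :=
  fderiv ℝ u x (0, 1)

/-- The Hörmander vector fields: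
`X_i u = ∂u/∂x_i + 2kc (x_{i+n} - a_{i+n}) Σ^{k-1} ∂u/∂t` for `1 ≤ i ≤ n`, and
`X_j u = ∂u/∂x_j - 2kc (x_{j-n} - a_{j-n}) Σ^{k-1} ∂u/∂t` for `n+1 ≤ j ≤ 2n`. -/
def X (n : ℕ) (k c : ℝ) (a : Fin n ⊕ Fin n → ℝ) (l : Fin n ⊕ Fin n)
    (u : Pt n → ℝ) (x : Pt n) : ℝ :=
  match l with
  | Sum.inl i => pdx n (Sum.inl i) u x
      + 2 * k * c * (x.1 (Sum.inr i) - a (Sum.inr i)) * Sg n a x ^ (k - 1) * pdt n u x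
  | Sum.inr j => pdx n (Sum.inr j) u x
      - 2 * k * c * (x.1 (Sum.inl j) - a (Sum.inl j)) * Sg n a x ^ (k - 1) * pdt n u x

/-- Norm of the horizontal gradient `∇₀u = (X₁u, …, X_{2n}u)`. -/
def hnorm (n : ℕ) (k c : ℝ) (a : Fin n ⊕ Fin n → ℝ) (u : Pt n → ℝ) (x : Pt n) : ℝ :=
  Real.sqrt (∑ l : Fin n ⊕ Fin n, (X n k c a l u x) ^ 2)

/-- The `p`-Laplacian `Δ_p u = ∑_{l=1}^{2n} X_l (‖∇₀u‖^{p-2} X_l u)`. -/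
def pLap (n : ℕ) (k c : ℝ) (a : Fin n ⊕ Fin n → ℝ) (p : ℝ) (u : Pt n → ℝ) (x : Pt n) : ℝ :=
  ∑ l : Fin n ⊕ Fin n,
    X n k c a l (fun y => hnorm n k c a u y ^ (p - 2) * X n k c a l u y) x

/-- `h(x) = c² Σ(x)^{2k} + (t-s)²`. -/
def hfun (n : ℕ) (k c : ℝ) (a : Fin n ⊕ Fin n → ℝ) (s : ℝ) (x : Pt n) : ℝ :=
  c ^ 2 * Sg n a x ^ (2 * k) + (x.2 - s) ^ 2

/-- `ψ = h^{1/(4k)}`. -/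
def psi (n : ℕ) (k c : ℝ) (a : Fin n ⊕ Fin n → ℝ) (s : ℝ) (x : Pt n) : ℝ :=
  hfun n k c a s x ^ (1 / (4 * k))


lemma rpow_sq_mul_self {x : ℝ} (hx : 0 < x) (r : ℝ) : (x ^ r) ^ 2 * x = x ^ (2 * r + 1) := by
  rw [← rpow_natCast, ← rpow_mul hx.le, rpow_add_one hx.ne', Nat.cast_ofNat, mul_comm r]

section HorizontalGradient

variable {n : ℕ} {k c : ℝ} {a : Fin n ⊕ Fin n → ℝ}

lemma Sg_pos {x : Pt n} (hx : Sg n a x ≠ 0) : 0 < Sg n a x :=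
  (Finset.sum_nonneg fun _ _ => sq_nonneg _).lt_of_ne' hx

lemma X_comp_of_hasDerivAt {g : ℝ → ℝ} {g' : ℝ} {u : Pt n → ℝ} {x : Pt n}
    (hg : HasDerivAt g g' (u x)) (hu : DifferentiableAt ℝ u x) (l : Fin n ⊕ Fin n) :
    X n k c a l (fun y => g (u y)) x = g' * X n k c a l u x := by
  have hfd : fderiv ℝ (fun y => g (u y)) x = g' • fderiv ℝ u x :=
    (hg.comp_hasFDerivAt x hu.hasFDerivAt).fderiv
  cases l <;> simp only [X, pdx, pdt, hfd, FunLike.coe_smul, Pi.smul_apply,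
    smul_eq_mul] <;> ring

def coordCLM (l : Fin n ⊕ Fin n) : Pt n →L[ℝ] ℝ :=
  (ContinuousLinearMap.proj l : ((Fin n ⊕ Fin n) → ℝ) →L[ℝ] ℝ).comp
    (ContinuousLinearMap.fst ℝ _ ℝ)

lemma hasFDerivAt_Sg (x : Pt n) :
    HasFDerivAt (Sg n a) (∑ l, (2 * (x.1 l - a l)) • coordCLM l) x := by
  refine HasFDerivAt.fun_sum fun l _ => ?_
  have := (hasDerivAt_pow 2 (x.1 l - a l)).comp_hasFDerivAt x
    ((coordCLM l).hasFDerivAt.sub_const (a l))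
  norm_num at this
  exact this

lemma hasFDerivAt_hfun (s : ℝ) {x : Pt n} (hx : Sg n a x ≠ 0) :
    HasFDerivAt (hfun n k c a s)
      ((c ^ 2 * (2 * k * Sg n a x ^ (2 * k - 1))) • ∑ l, (2 * (x.1 l - a l)) • coordCLM l
        + (2 * (x.2 - s)) • ContinuousLinearMap.snd ℝ _ ℝ) x := by
  have hvert := (hasDerivAt_pow 2 (x.2 - s)).comp_hasFDerivAt x
    ((ContinuousLinearMap.snd ℝ ((Fin n ⊕ Fin n) → ℝ) ℝ).hasFDerivAt.sub_const s)
  norm_num at hvert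
  rw [mul_smul]
  exact (((hasFDerivAt_Sg x).rpow_const (Or.inl hx)).const_mul (c ^ 2)).add hvert

lemma pdx_hfun (s : ℝ) {x : Pt n} (hx : Sg n a x ≠ 0) (l : Fin n ⊕ Fin n) :
    pdx n l (hfun n k c a s) x = 4 * k * c ^ 2 * Sg n a x ^ (2 * k - 1) * (x.1 l - a l) := by
  rw [pdx, (hasFDerivAt_hfun s hx).fderiv]
  simp [coordCLM, Pi.single_apply, -Fintype.sum_sum_type]
  ring

lemma pdt_hfun (s : ℝ) {x : Pt n} (hx : Sg n a x ≠ 0) :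
    pdt n (hfun n k c a s) x = 2 * (x.2 - s) := by
  rw [pdt, (hasFDerivAt_hfun (k := k) (c := c) s hx).fderiv]
  simp [coordCLM]

lemma X_hfun_inl (s : ℝ) {x : Pt n} (hx : Sg n a x ≠ 0) (i : Fin n) :
    X n k c a (Sum.inl i) (hfun n k c a s) x
      = 4 * k * c * (c * Sg n a x ^ (2 * k - 1) * (x.1 (Sum.inl i) - a (Sum.inl i))
          + Sg n a x ^ (k - 1) * (x.1 (Sum.inr i) - a (Sum.inr i)) * (x.2 - s)) := by
  rw [X, pdx_hfun s hx, pdt_hfun s hx]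
  ring

lemma X_hfun_inr (s : ℝ) {x : Pt n} (hx : Sg n a x ≠ 0) (i : Fin n) :
    X n k c a (Sum.inr i) (hfun n k c a s) x
      = 4 * k * c * (c * Sg n a x ^ (2 * k - 1) * (x.1 (Sum.inr i) - a (Sum.inr i))
          - Sg n a x ^ (k - 1) * (x.1 (Sum.inl i) - a (Sum.inl i)) * (x.2 - s)) := by
  rw [X, pdx_hfun s hx, pdt_hfun s hx]
  ring

lemma sum_sq_X_hfun (s : ℝ) {x : Pt n} (hx : Sg n a x ≠ 0) :
    ∑ l, X n k c a l (hfun n k c a s) x ^ 2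
      = 16 * k ^ 2 * c ^ 2 * Sg n a x ^ (2 * k - 1) * hfun n k c a s x := by
  have hS := Sg_pos hx
  set S := Sg n a x
  set τ := x.2 - s
  have hpair : ∀ i : Fin n,
      X n k c a (Sum.inl i) (hfun n k c a s) x ^ 2 + X n k c a (Sum.inr i) (hfun n k c a s) x ^ 2
        = 16 * k ^ 2 * c ^ 2 * (c ^ 2 * (S ^ (2 * k - 1)) ^ 2 + (S ^ (k - 1)) ^ 2 * τ ^ 2)
          * ((x.1 (Sum.inl i) - a (Sum.inl i)) ^ 2 + (x.1 (Sum.inr i) - a (Sum.inr i)) ^ 2) := by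
    intro i
    rw [X_hfun_inl s hx, X_hfun_inr s hx]
    ring
  have hS₁ : (S ^ (2 * k - 1)) ^ 2 * S = S ^ (2 * k) * S ^ (2 * k - 1) := by
    rw [rpow_sq_mul_self hS, ← rpow_add hS]
    ring_nf
  have hS₂ : (S ^ (k - 1)) ^ 2 * S = S ^ (2 * k - 1) := by
    rw [rpow_sq_mul_self hS]
    ring_nf
  calc ∑ l, X n k c a l (hfun n k c a s) x ^ 2
      = 16 * k ^ 2 * c ^ 2 * (c ^ 2 * (S ^ (2 * k - 1)) ^ 2 + (S ^ (k - 1)) ^ 2 * τ ^ 2) * S := by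
        rw [Fintype.sum_sum_type, ← Finset.sum_add_distrib,
          Finset.sum_congr rfl fun i _ => hpair i, ← Finset.mul_sum, Finset.sum_add_distrib,
          ← Fintype.sum_sum_type (f := fun l => (x.1 l - a l) ^ 2)]
        rfl
    _ = 16 * k ^ 2 * c ^ 2
          * (c ^ 2 * ((S ^ (2 * k - 1)) ^ 2 * S) + (S ^ (k - 1)) ^ 2 * S * τ ^ 2) := by
        ring
    _ = 16 * k ^ 2 * c ^ 2 * S ^ (2 * k - 1) * hfun n k c a s x := by
        rw [hS₁, hS₂, hfun]
        ring

end HorizontalGradient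

theorem stmt1_general (n : ℕ) (a : Fin n ⊕ Fin n → ℝ) (s : ℝ)
    (c k : ℝ) (hc : c ≠ 0) (hk : 0 < k)
    (p Q w α : ℝ) (hp : 1 < p)
    (hα : α = (Q - p) / (1 - p)) (hw : w = (Q - p) / ((1 - p) * (4 * k)))
    (x : Pt n) (hx : Sg n a x ≠ 0) :
    ∑ l : Fin n ⊕ Fin n, (X n k c a l (fun y => hfun n k c a s y ^ w) x) ^ 2
      = α ^ 2 * c ^ 2 * hfun n k c a s x ^ (2 * w - 1) * Sg n a x ^ (2 * k - 1) := by
  have hh : 0 < hfun n k c a s x := by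
    have := rpow_pos_of_pos (Sg_pos hx) (2 * k)
    unfold hfun
    positivity
  have hX : ∀ l, X n k c a l (fun y => hfun n k c a s y ^ w) x
      = w * hfun n k c a s x ^ (w - 1) * X n k c a l (hfun n k c a s) x := fun l =>
    X_comp_of_hasDerivAt (hasDerivAt_rpow_const (Or.inl hh.ne'))
      (hasFDerivAt_hfun s hx).differentiableAt l
  have hα' : α = 4 * k * w := by
    rw [hα, hw]
    field_simp [(by linarith : 1 - p ≠ 0)]
  calc ∑ l, X n k c a l (fun y => hfun n k c a s y ^ w) x ^ 2
      = (w * hfun n k c a s x ^ (w - 1)) ^ 2 * ∑ l, X n k c a l (hfun n k c a s) x ^ 2 := by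
        simp_rw [hX, mul_pow, ← Finset.mul_sum]
    _ = (4 * k * w) ^ 2 * c ^ 2 * ((hfun n k c a s x ^ (w - 1)) ^ 2 * hfun n k c a s x)
          * Sg n a x ^ (2 * k - 1) := by
        rw [sum_sq_X_hfun s hx]
        ring
    _ = α ^ 2 * c ^ 2 * hfun n k c a s x ^ (2 * w - 1) * Sg n a x ^ (2 * k - 1) := by
        rw [rpow_sq_mul_self hh, hα']
        ring_nf

theorem stmt1 (n : ℕ) (hn : 1 ≤ n) (a : Fin n ⊕ Fin n → ℝ) (s : ℝ)
    (c k : ℝ) (hc : c ≠ 0) (hk : 0 < k)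
    (p Q w α : ℝ) (hp : 1 < p) (hQ : Q = 2 * n + 2 * k) (hpQ : p ≠ Q)
    (hα : α = (Q - p) / (1 - p)) (hw : w = (Q - p) / ((1 - p) * (4 * k)))
    (x : Pt n) (hx : Sg n a x ≠ 0) :
    ∑ l : Fin n ⊕ Fin n, (X n k c a l (fun y => hfun n k c a s y ^ w) x) ^ 2
      = α ^ 2 * c ^ 2 * hfun n k c a s x ^ (2 * w - 1) * Sg n a x ^ (2 * k - 1) :=
  stmt1_general n a s c k hc hk p Q w α hp hα hw x hx
end
end

section
/- Let 1 < p < ∞ with p ≠ Q. At every point of ℝ^{2n+1} ∖ {x₀} where Σ ≠ 0, the function f = h^w satisfies the p-Laplace equation Δ_p f = Σ_{i=1}^{2n} X_i(‖∇₀f‖^{p−2} X_i f) = 0. -/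
/-!
Each `X l` is the derivation `u ↦ du(V_l)` along the vector field
`V_l = e_l + 2kc Σ^{k-1} (Jz)_l ∂_t`, where `z_l = x_l - a_l` and `J` is the standard complex
structure on `ℝ^{2n}`. Then `X_l h = 4kc Σ^{k-1} G_l` with `G_l = c Σ^k z_l + (t - s) (Jz)_l`, and
since `z ⊥ Jz`, `|Jz| = |z|`, one gets `∑ G_l² = Σ h`. Hence `|∇₀ h^w|` is a product of powers of
`h` and `Σ`, and the flux `|∇₀ f|^{p-2} X_l f` is `K h^A Σ^B G_l`. Differentiating once more, with
`∑ z_l G_l = c Σ^{k+1}` and `∑ X_l G_l = (4k + 2n) c Σ^k`, gives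
`Δ_p f = K c h^A Σ^{B+k} (4kA + 2B + 4k + 2n)`, and the last factor equals
`4kw(p - 1) + Q - p`, which vanishes by the choice of `w`.
-/

open MeasureTheory Real Filter

noncomputable section

open Topology

section ComplexStructure

variable {ι : Type*} [Fintype ι]

def rotJ (v : ι ⊕ ι → ℝ) : ι ⊕ ι → ℝ :=
  Sum.elim (fun i => v (Sum.inr i)) (fun i => -v (Sum.inl i))

lemma sum_rotJ_sq (v : ι ⊕ ι → ℝ) : ∑ l, rotJ v l ^ 2 = ∑ l, v l ^ 2 := by
  simp [rotJ, Fintype.sum_sum_type, add_comm]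

lemma sum_mul_rotJ (v : ι ⊕ ι → ℝ) : ∑ l, v l * rotJ v l = 0 := by
  simp [rotJ, Fintype.sum_sum_type, mul_comm]

@[fun_prop]
lemma differentiable_rotJ (l : ι ⊕ ι) :
    Differentiable ℝ (fun v : ι ⊕ ι → ℝ => rotJ v l) := by
  cases l <;> simp only [rotJ, Sum.elim_inl, Sum.elim_inr] <;> fun_prop

end ComplexStructure

section VectorFields

variable {n : ℕ} {k c : ℝ} {a : Fin n ⊕ Fin n → ℝ}

def fieldVec (n : ℕ) (k c : ℝ) (a : Fin n ⊕ Fin n → ℝ) (l : Fin n ⊕ Fin n) (y : Pt n) :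
    Pt n :=
  (Pi.single l 1, 2 * k * c * rotJ (y.1 - a) l * Sg n a y ^ (k - 1))

lemma X_eq_fderiv (l : Fin n ⊕ Fin n) (u : Pt n → ℝ) (y : Pt n) :
    X n k c a l u y = fderiv ℝ u y (fieldVec n k c a l y) := by
  have hsplit : fieldVec n k c a l y = (Pi.single l 1, 0)
      + (fieldVec n k c a l y).2 • ((0 : Fin n ⊕ Fin n → ℝ), (1 : ℝ)) := by
    ext <;> simp [fieldVec]
  rw [hsplit, map_add, map_smul, smul_eq_mul]
  cases l
  · simp [X, pdx, pdt, fieldVec, rotJ]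
  · simp [X, pdx, pdt, fieldVec, rotJ]; ring

variable {l : Fin n ⊕ Fin n} {u v : Pt n → ℝ} {y : Pt n}

lemma X_of_hasFDerivAt {L : Pt n →L[ℝ] ℝ} (h : HasFDerivAt u L y) :
    X n k c a l u y = L (fieldVec n k c a l y) := by
  rw [X_eq_fderiv, h.fderiv]

lemma X_congr (h : u =ᶠ[𝓝 y] v) : X n k c a l u y = X n k c a l v y := by
  rw [X_eq_fderiv, X_eq_fderiv, h.fderiv_eq]

lemma X_add (hu : DifferentiableAt ℝ u y) (hv : DifferentiableAt ℝ v y) :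
    X n k c a l (fun y => u y + v y) y = X n k c a l u y + X n k c a l v y :=
  (X_of_hasFDerivAt (hu.hasFDerivAt.add hv.hasFDerivAt)).trans <| by simp [X_eq_fderiv]

lemma X_neg (hu : DifferentiableAt ℝ u y) :
    X n k c a l (fun y => -u y) y = -X n k c a l u y :=
  (X_of_hasFDerivAt hu.hasFDerivAt.neg).trans <| by simp [X_eq_fderiv]

lemma X_sum {ι : Type*} {s : Finset ι} {u : ι → Pt n → ℝ}
    (hu : ∀ i ∈ s, DifferentiableAt ℝ (u i) y) :
    X n k c a l (fun y => ∑ i ∈ s, u i y) y = ∑ i ∈ s, X n k c a l (u i) y := by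
  simp only [X_eq_fderiv, fderiv_fun_sum hu, FunLike.coe_sum, Finset.sum_apply]

lemma X_mul (hu : DifferentiableAt ℝ u y) (hv : DifferentiableAt ℝ v y) :
    X n k c a l (fun y => u y * v y) y = u y * X n k c a l v y + v y * X n k c a l u y :=
  (X_of_hasFDerivAt (hu.hasFDerivAt.mul hv.hasFDerivAt)).trans <| by simp [X_eq_fderiv]

lemma X_const_mul (hu : DifferentiableAt ℝ u y) (r : ℝ) :
    X n k c a l (fun y => r * u y) y = r * X n k c a l u y :=
  (X_of_hasFDerivAt (hu.hasFDerivAt.const_mul r)).trans <| by simp [X_eq_fderiv]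

lemma X_pow (hu : DifferentiableAt ℝ u y) (m : ℕ) :
    X n k c a l (fun y => u y ^ m) y = m * u y ^ (m - 1) * X n k c a l u y :=
  (X_of_hasFDerivAt (hu.hasFDerivAt.pow m)).trans <| by simp [X_eq_fderiv]

lemma X_rpow_const (hu : DifferentiableAt ℝ u y) (hy : u y ≠ 0) (r : ℝ) :
    X n k c a l (fun y => u y ^ r) y = r * u y ^ (r - 1) * X n k c a l u y :=
  (X_of_hasFDerivAt (hu.hasFDerivAt.rpow_const (Or.inl hy))).trans <| by simp [X_eq_fderiv]

end VectorFields

section Computation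

variable {n : ℕ} {k c s : ℝ} {a : Fin n ⊕ Fin n → ℝ} {l : Fin n ⊕ Fin n} {y : Pt n}

lemma Sg_nonneg : 0 ≤ Sg n a y := Finset.sum_nonneg fun _ _ => sq_nonneg _

@[fun_prop]
lemma differentiable_Sg : Differentiable ℝ (Sg n a) := by
  unfold Sg; fun_prop

lemma X_coord (m : Fin n ⊕ Fin n) :
    X n k c a l (fun y => y.1 m - a m) y = if m = l then 1 else 0 :=
  (X_of_hasFDerivAt ((((ContinuousLinearMap.proj m).comp
    (ContinuousLinearMap.fst ℝ _ ℝ)).hasFDerivAt).sub_const (a m))).trans <| by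
      simp [fieldVec, Pi.single_apply]

lemma X_time :
    X n k c a l (fun y => y.2 - s) y = 2 * k * c * rotJ (y.1 - a) l * Sg n a y ^ (k - 1) :=
  (X_of_hasFDerivAt ((ContinuousLinearMap.snd ℝ _ ℝ).hasFDerivAt.sub_const s)).trans <| by
    simp [fieldVec]

lemma X_Sg : X n k c a l (Sg n a) y = 2 * (y.1 l - a l) := by
  have hterm (m : Fin n ⊕ Fin n) :
      X n k c a l (fun y => (y.1 m - a m) ^ 2) y = if m = l then 2 * (y.1 m - a m) else 0 := by
    rw [X_pow (by fun_prop), X_coord]; split_ifs <;> simp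
  rw [show Sg n a = fun y => ∑ m, (y.1 m - a m) ^ 2 from rfl, X_sum fun m _ => by fun_prop]
  simp [hterm]

lemma X_rotJ : X n k c a l (fun y => rotJ (y.1 - a) l) y = 0 := by
  cases l <;> simp only [rotJ, Pi.sub_apply, Sum.elim_inl, Sum.elim_inr]
  · simp [X_coord]
  · rw [X_neg (by fun_prop), X_coord]; simp

lemma Sg_rpow_two_mul (k : ℝ) : Sg n a y ^ (2 * k) = (Sg n a y ^ k) ^ 2 := by
  rw [mul_comm, Real.rpow_mul Sg_nonneg]; norm_cast

lemma differentiableAt_hfun (hS : Sg n a y ≠ 0) : DifferentiableAt ℝ (hfun n k c a s) y := by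
  unfold hfun; fun_prop (disch := exact Or.inl hS)

def gradDir (n : ℕ) (k c : ℝ) (a : Fin n ⊕ Fin n → ℝ) (s : ℝ) (l : Fin n ⊕ Fin n) (y : Pt n) :
    ℝ :=
  c * Sg n a y ^ k * (y.1 l - a l) + rotJ (y.1 - a) l * (y.2 - s)

lemma differentiableAt_gradDir (hS : Sg n a y ≠ 0) :
    DifferentiableAt ℝ (gradDir n k c a s l) y := by
  unfold gradDir; fun_prop (disch := exact Or.inl hS)

lemma X_hfun (hS : 0 < Sg n a y) :
    X n k c a l (hfun n k c a s) y = 4 * k * c * Sg n a y ^ (k - 1) * gradDir n k c a s l y := by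
  have hpow : Sg n a y ^ (2 * k - 1) = Sg n a y ^ (k - 1) * Sg n a y ^ k := by
    rw [← Real.rpow_add hS]; ring_nf
  have hSk : DifferentiableAt ℝ (fun y => Sg n a y ^ (2 * k)) y := by
    fun_prop (disch := exact Or.inl hS.ne')
  rw [show hfun n k c a s = fun y => c ^ 2 * Sg n a y ^ (2 * k) + (y.2 - s) ^ 2 from rfl,
    X_add (by fun_prop) (by fun_prop), X_const_mul hSk, X_rpow_const (by fun_prop) hS.ne',
    X_pow (by fun_prop), X_Sg, X_time, hpow, gradDir]
  push_cast; ring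

lemma sum_gradDir_sq : ∑ l, gradDir n k c a s l y ^ 2 = Sg n a y * hfun n k c a s y := by
  set v := y.1 - a
  have hSv : Sg n a y = ∑ l, v l ^ 2 := rfl
  calc ∑ l, gradDir n k c a s l y ^ 2
      = (c * Sg n a y ^ k) ^ 2 * ∑ l, v l ^ 2
          + 2 * (c * Sg n a y ^ k) * (y.2 - s) * ∑ l, v l * rotJ v l
          + (y.2 - s) ^ 2 * ∑ l, rotJ v l ^ 2 := by
        simp only [gradDir, Finset.mul_sum, ← Finset.sum_add_distrib]
        exact Finset.sum_congr rfl fun l _ => by simp only [v, Pi.sub_apply]; ring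
    _ = Sg n a y * hfun n k c a s y := by
        rw [sum_mul_rotJ, sum_rotJ_sq, ← hSv, hfun, Sg_rpow_two_mul]; ring

lemma sum_mul_gradDir :
    ∑ l, (y.1 l - a l) * gradDir n k c a s l y = c * Sg n a y ^ k * Sg n a y := by
  set v := y.1 - a
  calc ∑ l, (y.1 l - a l) * gradDir n k c a s l y
      = c * Sg n a y ^ k * ∑ l, v l ^ 2 + (y.2 - s) * ∑ l, v l * rotJ v l := by
        simp only [gradDir, Finset.mul_sum, ← Finset.sum_add_distrib]
        exact Finset.sum_congr rfl fun l _ => by simp only [v, Pi.sub_apply]; ring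
    _ = c * Sg n a y ^ k * Sg n a y := by rw [sum_mul_rotJ]; simp [v, Sg]

lemma X_gradDir (hS : 0 < Sg n a y) :
    X n k c a l (gradDir n k c a s l) y
      = c * (2 * k * Sg n a y ^ (k - 1) * (y.1 l - a l) ^ 2 + Sg n a y ^ k)
        + 2 * k * c * Sg n a y ^ (k - 1) * rotJ (y.1 - a) l ^ 2 := by
  have hSk : DifferentiableAt ℝ (fun y => Sg n a y ^ k) y := by
    fun_prop (disch := exact Or.inl hS.ne')
  rw [show gradDir n k c a s l
      = fun y => c * Sg n a y ^ k * (y.1 l - a l) + rotJ (y.1 - a) l * (y.2 - s) from rfl,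
    X_add (by fun_prop (disch := exact Or.inl hS.ne')) (by fun_prop),
    X_mul (by fun_prop) (by fun_prop), X_const_mul hSk, X_mul (by fun_prop) (by fun_prop),
    X_rpow_const (by fun_prop) hS.ne', X_Sg, X_coord, X_rotJ, X_time]
  simp only [if_true]; ring

lemma sum_X_gradDir (hS : 0 < Sg n a y) :
    ∑ l, X n k c a l (gradDir n k c a s l) y = c * Sg n a y ^ k * (4 * k + 2 * n) := by
  set v := y.1 - a
  calc ∑ l, X n k c a l (gradDir n k c a s l) y
      = 2 * k * c * Sg n a y ^ (k - 1) * (∑ l, v l ^ 2 + ∑ l, rotJ v l ^ 2)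
          + ∑ _l : Fin n ⊕ Fin n, c * Sg n a y ^ k := by
        simp only [X_gradDir hS, Finset.mul_sum, ← Finset.sum_add_distrib]
        exact Finset.sum_congr rfl fun l _ => by simp only [v, Pi.sub_apply]; ring
    _ = c * Sg n a y ^ k * (4 * k + 2 * n) := by
        rw [sum_rotJ_sq, show ∑ l, v l ^ 2 = Sg n a y from rfl, Real.rpow_sub_one hS.ne']
        simp only [Finset.sum_const, Finset.card_univ, Fintype.card_sum, Fintype.card_fin,
          nsmul_eq_mul]
        field_simp
        push_cast; ring

lemma hfun_pos (hc : c ≠ 0) (hS : 0 < Sg n a y) : 0 < hfun n k c a s y := by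
  unfold hfun; positivity

lemma X_hfun_rpow (hc : c ≠ 0) (hS : 0 < Sg n a y) (w : ℝ) :
    X n k c a l (fun y => hfun n k c a s y ^ w) y
      = w * hfun n k c a s y ^ (w - 1)
        * (4 * k * c * Sg n a y ^ (k - 1) * gradDir n k c a s l y) := by
  rw [X_rpow_const (differentiableAt_hfun hS.ne') (hfun_pos hc hS).ne', X_hfun hS]

lemma hnorm_hfun_rpow (hc : c ≠ 0) (hS : 0 < Sg n a y) (w : ℝ) :
    hnorm n k c a (fun y => hfun n k c a s y ^ w) y
      = |4 * k * c * w| * hfun n k c a s y ^ (w - 1 / 2) * Sg n a y ^ (k - 1 / 2) := by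
  have hh := hfun_pos (k := k) (s := s) hc hS
  have hsq : ∑ l, X n k c a l (fun y => hfun n k c a s y ^ w) y ^ 2
      = (4 * k * c * w * hfun n k c a s y ^ (w - 1) * Sg n a y ^ (k - 1)) ^ 2
        * (Sg n a y * hfun n k c a s y) := by
    simp only [X_hfun_rpow hc hS, ← sum_gradDir_sq, Finset.mul_sum]
    exact Finset.sum_congr rfl fun l _ => by ring
  rw [hnorm, hsq, Real.sqrt_mul (sq_nonneg _), Real.sqrt_sq_eq_abs, Real.sqrt_eq_rpow,
    Real.mul_rpow hS.le hh.le, abs_mul, abs_mul, abs_of_pos (Real.rpow_pos_of_pos hh _),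
    abs_of_pos (Real.rpow_pos_of_pos hS _), show w - 1 / 2 = (w - 1) + 1 / 2 by ring,
    show k - 1 / 2 = (k - 1) + 1 / 2 by ring, Real.rpow_add hh, Real.rpow_add hS]
  ring

def pFlux (n : ℕ) (k c : ℝ) (a : Fin n ⊕ Fin n → ℝ) (p : ℝ) (u : Pt n → ℝ)
    (l : Fin n ⊕ Fin n) (y : Pt n) : ℝ :=
  hnorm n k c a u y ^ (p - 2) * X n k c a l u y

lemma pFlux_hfun_rpow (hc : c ≠ 0) (hS : 0 < Sg n a y) (p w : ℝ) :
    pFlux n k c a p (fun y => hfun n k c a s y ^ w) l y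
      = |4 * k * c * w| ^ (p - 2) * (4 * k * c * w)
        * hfun n k c a s y ^ ((w - 1 / 2) * (p - 2) + (w - 1))
        * Sg n a y ^ ((k - 1 / 2) * (p - 2) + (k - 1)) * gradDir n k c a s l y := by
  have hh := hfun_pos (k := k) (s := s) hc hS
  rw [pFlux, hnorm_hfun_rpow hc hS, X_hfun_rpow hc hS,
    Real.mul_rpow (by positivity) (Real.rpow_pos_of_pos hS _).le,
    Real.mul_rpow (abs_nonneg _) (Real.rpow_pos_of_pos hh _).le,
    ← Real.rpow_mul hh.le, ← Real.rpow_mul hS.le, Real.rpow_add hh, Real.rpow_add hS]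
  ring

lemma X_mul_hfun_rpow_mul_Sg_rpow_mul_gradDir (hc : c ≠ 0) (hS : 0 < Sg n a y) (K A B : ℝ) :
    X n k c a l (fun y => K * hfun n k c a s y ^ A * Sg n a y ^ B * gradDir n k c a s l y) y
      = K * (A * hfun n k c a s y ^ (A - 1) * Sg n a y ^ B * (4 * k * c * Sg n a y ^ (k - 1))
            * gradDir n k c a s l y ^ 2
          + 2 * B * hfun n k c a s y ^ A * Sg n a y ^ (B - 1)
            * ((y.1 l - a l) * gradDir n k c a s l y)
          + hfun n k c a s y ^ A * Sg n a y ^ B * X n k c a l (gradDir n k c a s l) y) := by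
  have hh := hfun_pos (k := k) (s := s) hc hS
  have hhA : DifferentiableAt ℝ (fun y => hfun n k c a s y ^ A) y :=
    (differentiableAt_hfun hS.ne').rpow_const (Or.inl hh.ne')
  have hSB : DifferentiableAt ℝ (fun y => Sg n a y ^ B) y := by
    fun_prop (disch := exact Or.inl hS.ne')
  have hKAB : DifferentiableAt ℝ (fun y => K * hfun n k c a s y ^ A * Sg n a y ^ B) y :=
    (hhA.const_mul K).mul hSB
  rw [X_mul hKAB (differentiableAt_gradDir hS.ne'),
    X_mul (hhA.const_mul K) hSB, X_const_mul hhA,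
    X_rpow_const (differentiableAt_hfun hS.ne') hh.ne', X_hfun hS,
    X_rpow_const (by fun_prop) hS.ne', X_Sg]
  ring

lemma pLap_eq_sum_X_pFlux (p : ℝ) (u : Pt n → ℝ) (x : Pt n) :
    pLap n k c a p u x = ∑ l, X n k c a l (pFlux n k c a p u l) x := rfl

lemma exists_pLap_hfun_rpow_eq_mul (hc : c ≠ 0) {x : Pt n} (hS : 0 < Sg n a x) (p w : ℝ) :
    ∃ C, pLap n k c a p (fun y => hfun n k c a s y ^ w) x
      = C * (4 * k * ((w - 1 / 2) * (p - 2) + (w - 1)) + 2 * ((k - 1 / 2) * (p - 2) + (k - 1))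
          + 4 * k + 2 * n) := by
  set K := |4 * k * c * w| ^ (p - 2) * (4 * k * c * w)
  set A := (w - 1 / 2) * (p - 2) + (w - 1)
  set B := (k - 1 / 2) * (p - 2) + (k - 1)
  have hh := hfun_pos (k := k) (s := s) hc hS
  have hnear : ∀ᶠ y in 𝓝 x, 0 < Sg n a y :=
    differentiable_Sg.continuous.continuousAt.eventually (lt_mem_nhds hS)
  have hX (l : Fin n ⊕ Fin n) :=
    (X_congr (k := k) (c := c) (l := l) (hnear.mono fun y hy =>
      pFlux_hfun_rpow (s := s) (l := l) hc hy p w)).trans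
    (X_mul_hfun_rpow_mul_Sg_rpow_mul_gradDir hc hS K A B)
  refine ⟨K * c * hfun n k c a s x ^ A * Sg n a x ^ B * Sg n a x ^ k, ?_⟩
  rw [pLap_eq_sum_X_pFlux, Finset.sum_congr rfl fun l _ => hX l]
  simp only [← Finset.mul_sum, Finset.sum_add_distrib]
  rw [sum_gradDir_sq, sum_mul_gradDir, sum_X_gradDir hS, Real.rpow_sub_one hh.ne',
    Real.rpow_sub_one hS.ne', Real.rpow_sub_one hS.ne']
  field_simp
  ring

end Computation

theorem stmt2_general (n : ℕ) (a : Fin n ⊕ Fin n → ℝ) (s : ℝ)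
    (c k : ℝ) (hc : c ≠ 0) (hk : 0 < k)
    (p Q w : ℝ) (hp : 1 < p) (hQ : Q = 2 * n + 2 * k)
    (hw : w = (Q - p) / ((1 - p) * (4 * k)))
    (x : Pt n) (hx : Sg n a x ≠ 0) :
    pLap n k c a p (fun y => hfun n k c a s y ^ w) x = 0 := by
  obtain ⟨C, hC⟩ :=
    exists_pLap_hfun_rpow_eq_mul (k := k) (s := s) hc (Sg_nonneg.lt_of_ne' hx) p w
  have hexponent : 4 * k * ((w - 1 / 2) * (p - 2) + (w - 1)) + 2 * ((k - 1 / 2) * (p - 2) + (k - 1))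
      + 4 * k + 2 * n = 0 := by
    have hp1 : 1 - p ≠ 0 := by linarith
    subst hw hQ
    field_simp
    ring
  rw [hC, hexponent, mul_zero]

theorem stmt2 (n : ℕ) (hn : 1 ≤ n) (a : Fin n ⊕ Fin n → ℝ) (s : ℝ)
    (c k : ℝ) (hc : c ≠ 0) (hk : 0 < k)
    (p Q w : ℝ) (hp : 1 < p) (hQ : Q = 2 * n + 2 * k) (hpQ : p ≠ Q)
    (hw : w = (Q - p) / ((1 - p) * (4 * k)))
    (x : Pt n) (hx0 : x ≠ (a, s)) (hx : Sg n a x ≠ 0) :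
    pLap n k c a p (fun y => hfun n k c a s y ^ w) x = 0 :=
  stmt2_general n a s c k hc hk p Q w hp hQ hw x hx
end
end

section
/- Let p = Q. At every point of ℝ^{2n+1} ∖ {x₀} where Σ ≠ 0, the function log ψ satisfies the Q-Laplace equation Δ_Q(log ψ) = Σ_{i=1}^{2n} X_i(‖∇₀(log ψ)‖^{Q−2} X_i(log ψ)) = 0. -/
open MeasureTheory Real Filter

noncomputable section

/-!
With `u = log ψ = (1/4k) log h`, the vector fields act on `h` by `X_l h = 4kc Σ^{k-1} P_l`, where
`P_l = c Σ^k (x_l - a_l) + (J(x - a))_l (t - s)` and `J` is the standard complex structure.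
Since `J` is orthogonal and skew, `∑ P_l² = h Σ`, so `‖∇₀u‖² = c² Σ^{2k-1} / h` and the field
`‖∇₀u‖^{p-2} ∇₀u` is a constant multiple of `(Σ^A P_l h^M)_l` for explicit exponents `A`, `M`.
Its divergence follows from the Leibniz rule together with `X_l Σ = 2(x_l - a_l)`,
`∑ (x_l - a_l) P_l = c Σ^{k+1}` and `∑ X_l P_l = (2n + 4k) c Σ^k`: it equals `Q - p` times a
positive function, so it vanishes exactly for `p = Q`.
-/

open Topology

namespace QLaplace

/-- The complex structure `J(v)_i = v_{i+n}`, `J(v)_{i+n} = -v_i` on `ℝ^{2n}`. -/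
def cplxJ {ι : Type*} (v : ι ⊕ ι → ℝ) : ι ⊕ ι → ℝ
  | .inl i => v (.inr i)
  | .inr i => -v (.inl i)

lemma sum_cplxJ_sq {ι : Type*} [Fintype ι] (v : ι ⊕ ι → ℝ) :
    ∑ l, cplxJ v l ^ 2 = ∑ l, v l ^ 2 := by
  simp only [Fintype.sum_sum_type, cplxJ, neg_sq]
  ring

lemma sum_mul_cplxJ {ι : Type*} [Fintype ι] (v : ι ⊕ ι → ℝ) : ∑ l, v l * cplxJ v l = 0 := by
  simp only [Fintype.sum_sum_type, cplxJ, neg_mul, Finset.sum_neg_distrib, mul_comm (v (.inr _))]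
  exact add_neg_cancel _

variable {n : ℕ} {k c : ℝ} {a : Fin n ⊕ Fin n → ℝ} {s : ℝ} {l : Fin n ⊕ Fin n}
  {u v : Pt n → ℝ} {y : Pt n}

def horizField (n : ℕ) (k c : ℝ) (a : Fin n ⊕ Fin n → ℝ) (l : Fin n ⊕ Fin n) (y : Pt n) :
    Pt n :=
  (Pi.single l 1, 2 * k * c * cplxJ (y.1 - a) l * Sg n a y ^ (k - 1))

lemma X_eq_fderiv : X n k c a l u y = fderiv ℝ u y (horizField n k c a l y) := by
  have : horizField n k c a l y
      = (Pi.single l 1, 0) + (2 * k * c * cplxJ (y.1 - a) l * Sg n a y ^ (k - 1)) • (0, 1) := by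
    simp [horizField]
  rw [this, map_add, map_smul]
  cases l with
  | inl i => simp only [X, pdx, pdt, cplxJ, Pi.sub_apply, smul_eq_mul]
  | inr i => simp only [X, pdx, pdt, cplxJ, Pi.sub_apply, smul_eq_mul]; ring

lemma X_eq_of_hasFDerivAt {u' : Pt n →L[ℝ] ℝ} (hu : HasFDerivAt u u' y) :
    X n k c a l u y = u' (horizField n k c a l y) := by
  rw [X_eq_fderiv, hu.fderiv]

lemma X_congr (h : u =ᶠ[𝓝 y] v) : X n k c a l u y = X n k c a l v y := by
  simp only [X_eq_fderiv, h.fderiv_eq]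

lemma X_const_mul (r : ℝ) (hu : DifferentiableAt ℝ u y) :
    X n k c a l (fun z => r * u z) y = r * X n k c a l u y := by
  rw [X_eq_of_hasFDerivAt (hu.hasFDerivAt.const_mul r), X_eq_fderiv]
  rfl

lemma X_add (hu : DifferentiableAt ℝ u y) (hv : DifferentiableAt ℝ v y) :
    X n k c a l (fun z => u z + v z) y = X n k c a l u y + X n k c a l v y := by
  rw [X_eq_of_hasFDerivAt (hu.hasFDerivAt.fun_add hv.hasFDerivAt), X_eq_fderiv, X_eq_fderiv]
  rfl

lemma X_mul (hu : DifferentiableAt ℝ u y) (hv : DifferentiableAt ℝ v y) :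
    X n k c a l (fun z => u z * v z) y = X n k c a l u y * v y + u y * X n k c a l v y := by
  rw [X_eq_of_hasFDerivAt (hu.hasFDerivAt.fun_mul hv.hasFDerivAt), X_eq_fderiv, X_eq_fderiv]
  simp only [add_apply, smul_apply, smul_eq_mul]
  ring

lemma X_rpow_const (r : ℝ) (hu : DifferentiableAt ℝ u y) (hy : u y ≠ 0) :
    X n k c a l (fun z => u z ^ r) y = r * u y ^ (r - 1) * X n k c a l u y := by
  rw [X_eq_of_hasFDerivAt (hu.hasFDerivAt.rpow_const (Or.inl hy)), X_eq_fderiv]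
  rfl

lemma X_pow (m : ℕ) (hu : DifferentiableAt ℝ u y) :
    X n k c a l (fun z => u z ^ m) y = m * u y ^ (m - 1) * X n k c a l u y := by
  rw [X_eq_of_hasFDerivAt (hu.hasFDerivAt.pow m), X_eq_fderiv]
  simp only [smul_apply, smul_eq_mul, nsmul_eq_mul]

lemma X_log (hu : DifferentiableAt ℝ u y) (hy : u y ≠ 0) :
    X n k c a l (fun z => Real.log (u z)) y = X n k c a l u y / u y := by
  rw [X_eq_of_hasFDerivAt (hu.hasFDerivAt.log hy), X_eq_fderiv]
  simp only [smul_apply, smul_eq_mul]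
  ring

lemma X_sum {ι : Type*} (t : Finset ι) {w : ι → Pt n → ℝ}
    (hw : ∀ i ∈ t, DifferentiableAt ℝ (w i) y) :
    X n k c a l (fun z => ∑ i ∈ t, w i z) y = ∑ i ∈ t, X n k c a l (w i) y := by
  rw [X_eq_of_hasFDerivAt (HasFDerivAt.fun_sum fun i hi => (hw i hi).hasFDerivAt)]
  simp only [sum_apply, X_eq_fderiv]

lemma X_coord (m : Fin n ⊕ Fin n) :
    X n k c a l (fun z => z.1 m - a m) y = (Pi.single l 1 : Fin n ⊕ Fin n → ℝ) m :=
  X_eq_of_hasFDerivAt ((((ContinuousLinearMap.proj m).comp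
    (ContinuousLinearMap.fst ℝ _ ℝ)).hasFDerivAt).sub_const _)

lemma X_time (s : ℝ) :
    X n k c a l (fun z => z.2 - s) y = 2 * k * c * cplxJ (y.1 - a) l * Sg n a y ^ (k - 1) :=
  X_eq_of_hasFDerivAt ((ContinuousLinearMap.snd ℝ _ ℝ).hasFDerivAt.sub_const _)

lemma X_cplxJ_self : X n k c a l (fun z => cplxJ (z.1 - a) l) y = 0 := by
  cases l with
  | inl i => simp [cplxJ, X_coord]
  | inr i =>
    have : (fun z : Pt n => cplxJ (z.1 - a) (.inr i)) = fun z => -1 * (z.1 (.inl i) - a (.inl i)) :=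
      funext fun z => by simp [cplxJ]
    rw [this, X_const_mul _ (by fun_prop), X_coord]
    simp

lemma differentiable_cplxJ_coord : Differentiable ℝ fun z : Pt n => cplxJ (z.1 - a) l := by
  cases l <;> simp only [cplxJ, Pi.sub_apply] <;> fun_prop

lemma differentiable_Sg : Differentiable ℝ (Sg n a) := by
  unfold Sg
  fun_prop

lemma X_Sg : X n k c a l (Sg n a) y = 2 * (y.1 l - a l) := by
  unfold Sg
  rw [X_sum _ fun m _ => by fun_prop,
    Finset.sum_congr rfl fun m _ => by rw [X_pow 2 (by fun_prop), X_coord]]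
  simp [Pi.single_apply]

lemma Sg_nonneg (y : Pt n) : 0 ≤ Sg n a y :=
  Finset.sum_nonneg fun _ _ => sq_nonneg _

lemma differentiableAt_hfun (hy : Sg n a y ≠ 0) : DifferentiableAt ℝ (hfun n k c a s) y := by
  unfold hfun
  have := (differentiable_Sg (a := a) y).rpow_const (p := 2 * k) (Or.inl hy)
  fun_prop

def P (n : ℕ) (k c : ℝ) (a : Fin n ⊕ Fin n → ℝ) (s : ℝ) (l : Fin n ⊕ Fin n) (y : Pt n) : ℝ :=
  c * (y.1 l - a l) * Sg n a y ^ k + cplxJ (y.1 - a) l * (y.2 - s)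

lemma X_hfun (hy : 0 < Sg n a y) :
    X n k c a l (hfun n k c a s) y = 4 * k * c * Sg n a y ^ (k - 1) * P n k c a s l y := by
  have hSk := (differentiable_Sg (a := a) y).rpow_const (p := 2 * k) (Or.inl hy.ne')
  unfold hfun
  rw [X_add (by fun_prop) (by fun_prop), X_const_mul _ hSk,
    X_rpow_const _ (differentiable_Sg y) hy.ne', X_pow 2 (by fun_prop), X_Sg, X_time]
  have h2k : Sg n a y ^ (2 * k - 1) = Sg n a y ^ (k - 1) * Sg n a y ^ k := by
    rw [← Real.rpow_add hy]; ring_nf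
  simp only [P, h2k]
  push_cast
  ring

lemma differentiableAt_P (hy : Sg n a y ≠ 0) : DifferentiableAt ℝ (P n k c a s l) y := by
  have := (differentiable_Sg (a := a) y).rpow_const (p := k) (Or.inl hy)
  have := differentiable_cplxJ_coord (a := a) (l := l) y
  unfold P
  fun_prop

lemma X_P (hy : 0 < Sg n a y) :
    X n k c a l (P n k c a s l) y = c * Sg n a y ^ k
      + 2 * k * c * Sg n a y ^ (k - 1) * ((y.1 l - a l) ^ 2 + cplxJ (y.1 - a) l ^ 2) := by
  have hSk := (differentiable_Sg (a := a) y).rpow_const (p := k) (Or.inl hy.ne')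
  have hJ := differentiable_cplxJ_coord (a := a) (l := l) y
  unfold P
  rw [X_add (by fun_prop) (by fun_prop), X_mul (by fun_prop) hSk, X_const_mul _ (by fun_prop),
    X_rpow_const _ (differentiable_Sg y) hy.ne', X_mul hJ (by fun_prop), X_coord, X_Sg,
    X_cplxJ_self, X_time]
  simp only [Pi.single_eq_same]
  ring

lemma sum_X_P (hy : 0 < Sg n a y) :
    ∑ l, X n k c a l (P n k c a s l) y = (2 * n + 4 * k) * c * Sg n a y ^ k := by
  have hsum : ∑ l, ((y.1 l - a l) ^ 2 + cplxJ (y.1 - a) l ^ 2) = 2 * Sg n a y := by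
    rw [Finset.sum_add_distrib, sum_cplxJ_sq]
    simp only [Sg, Pi.sub_apply]
    ring
  simp only [X_P hy, Finset.sum_add_distrib, ← Finset.mul_sum, hsum, Finset.sum_const,
    Finset.card_univ, Fintype.card_sum, Fintype.card_fin, nsmul_eq_mul, Real.rpow_sub_one hy.ne']
  field_simp
  push_cast
  ring

lemma sum_coord_mul_P :
    ∑ l, (y.1 l - a l) * P n k c a s l y = c * Sg n a y ^ k * Sg n a y := by
  have hJ : ∑ l, (y.1 l - a l) * cplxJ (y.1 - a) l = 0 := sum_mul_cplxJ _
  have hS : ∑ l, (y.1 l - a l) ^ 2 = Sg n a y := rfl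
  have hexp : ∀ l, (y.1 l - a l) * P n k c a s l y
      = c * Sg n a y ^ k * (y.1 l - a l) ^ 2 + (y.2 - s) * ((y.1 l - a l) * cplxJ (y.1 - a) l) :=
    fun l => by simp only [P]; ring
  simp only [hexp, Finset.sum_add_distrib, ← Finset.mul_sum, hJ, hS, mul_zero, add_zero]

lemma sum_P_sq (hy : 0 ≤ Sg n a y) :
    ∑ l, P n k c a s l y ^ 2 = hfun n k c a s y * Sg n a y := by
  have hJ : ∑ l, (y.1 l - a l) * cplxJ (y.1 - a) l = 0 := sum_mul_cplxJ _
  have hJ2 : ∑ l, cplxJ (y.1 - a) l ^ 2 = Sg n a y := sum_cplxJ_sq _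
  have hS : ∑ l, (y.1 l - a l) ^ 2 = Sg n a y := rfl
  have h2k : Sg n a y ^ (2 * k) = (Sg n a y ^ k) ^ 2 := by
    rw [mul_comm, Real.rpow_mul hy, Real.rpow_two]
  have hexp : ∀ l, P n k c a s l y ^ 2 = c ^ 2 * (Sg n a y ^ k) ^ 2 * (y.1 l - a l) ^ 2
      + 2 * c * Sg n a y ^ k * (y.2 - s) * ((y.1 l - a l) * cplxJ (y.1 - a) l)
      + (y.2 - s) ^ 2 * cplxJ (y.1 - a) l ^ 2 :=
    fun l => by simp only [P]; ring
  simp only [hexp, Finset.sum_add_distrib, ← Finset.mul_sum, hJ, hJ2, hS, hfun, h2k]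
  ring

lemma hfun_nonneg (y : Pt n) : 0 ≤ hfun n k c a s y := by
  unfold hfun
  have := Real.rpow_nonneg (Sg_nonneg (a := a) y) (2 * k)
  positivity

lemma hfun_pos (hc : c ≠ 0) (hy : 0 < Sg n a y) : 0 < hfun n k c a s y := by
  unfold hfun
  have := Real.rpow_pos_of_pos hy (2 * k)
  positivity

lemma differentiableAt_flux (hy : Sg n a y ≠ 0) (hh : hfun n k c a s y ≠ 0) (A M : ℝ) :
    DifferentiableAt ℝ (fun z => Sg n a z ^ A * P n k c a s l z * hfun n k c a s z ^ M) y :=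
  (((differentiable_Sg y).rpow_const (Or.inl hy)).fun_mul (differentiableAt_P hy)).fun_mul
    ((differentiableAt_hfun hy).rpow_const (Or.inl hh))

lemma sum_X_flux (hy : 0 < Sg n a y) (hh : 0 < hfun n k c a s y) (A M : ℝ) :
    ∑ l, X n k c a l (fun z => Sg n a z ^ A * P n k c a s l z * hfun n k c a s z ^ M) y
      = c * (2 * A + 2 * n + 4 * k + 4 * k * M) * Sg n a y ^ (A + k)
          * hfun n k c a s y ^ M := by
  have hterm : ∀ l, X n k c a l
      (fun z => Sg n a z ^ A * P n k c a s l z * hfun n k c a s z ^ M) y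
      = 2 * A * Sg n a y ^ (A - 1) * hfun n k c a s y ^ M * ((y.1 l - a l) * P n k c a s l y)
        + Sg n a y ^ A * hfun n k c a s y ^ M * X n k c a l (P n k c a s l) y
        + 4 * k * c * M * Sg n a y ^ A * Sg n a y ^ (k - 1) * hfun n k c a s y ^ (M - 1)
          * P n k c a s l y ^ 2 := fun l => by
    have hSA := (differentiable_Sg (a := a) y).rpow_const (p := A) (Or.inl hy.ne')
    have hhM := (differentiableAt_hfun (k := k) (c := c) (s := s) hy.ne').rpow_const (p := M)
      (Or.inl hh.ne')
    have hP := differentiableAt_P (k := k) (c := c) (s := s) (l := l) hy.ne'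
    rw [X_mul (hSA.fun_mul hP) hhM, X_mul hSA hP,
      X_rpow_const _ (differentiable_Sg y) hy.ne', X_Sg,
      X_rpow_const _ (differentiableAt_hfun hy.ne') hh.ne', X_hfun hy]
    ring
  simp only [hterm, Finset.sum_add_distrib, ← Finset.mul_sum, sum_coord_mul_P, sum_X_P hy,
    sum_P_sq hy.le, Real.rpow_sub_one hy.ne', Real.rpow_sub_one hh.ne', Real.rpow_add hy]
  field_simp
  ring

lemma log_psi (hk : k ≠ 0) :
    (fun z => Real.log (psi n k c a s z)) = fun z => 1 / (4 * k) * Real.log (hfun n k c a s z) := by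
  funext z
  rcases (hfun_nonneg (k := k) (c := c) (a := a) (s := s) z).eq_or_lt with h0 | h0
  · rw [psi, ← h0, Real.zero_rpow (by positivity), Real.log_zero, mul_zero]
  · rw [psi, Real.log_rpow h0]

lemma X_log_psi (hk : k ≠ 0) (hc : c ≠ 0) (hy : 0 < Sg n a y) :
    X n k c a l (fun z => Real.log (psi n k c a s z)) y
      = c * Sg n a y ^ (k - 1) * P n k c a s l y / hfun n k c a s y := by
  have hh := hfun_pos (k := k) (s := s) hc hy
  rw [log_psi hk, X_const_mul _ ((differentiableAt_hfun hy.ne').log hh.ne'),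
    X_log (differentiableAt_hfun hy.ne') hh.ne', X_hfun hy]
  field_simp

lemma hnorm_log_psi_rpow (hk : k ≠ 0) (hc : c ≠ 0) (hy : 0 < Sg n a y) (r : ℝ) :
    hnorm n k c a (fun z => Real.log (psi n k c a s z)) y ^ r
      = (c ^ 2 * Sg n a y ^ (2 * k - 1) / hfun n k c a s y) ^ (r / 2) := by
  have hh := hfun_pos (k := k) (s := s) hc hy
  have h2k : Sg n a y ^ (2 * k - 1) = (Sg n a y ^ (k - 1)) ^ 2 * Sg n a y := by
    rw [← Real.rpow_natCast, ← Real.rpow_mul hy.le, ← Real.rpow_add_one hy.ne']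
    ring_nf
  have hsq : ∑ l, X n k c a l (fun z => Real.log (psi n k c a s z)) y ^ 2
      = c ^ 2 * Sg n a y ^ (2 * k - 1) / hfun n k c a s y := by
    simp only [X_log_psi hk hc hy, div_pow, mul_pow, ← Finset.sum_div, ← Finset.mul_sum,
      sum_P_sq hy.le, h2k]
    field_simp
  rw [hnorm, hsq, Real.sqrt_eq_rpow, ← Real.rpow_mul (by positivity)]
  ring_nf

lemma flux_log_psi (hk : k ≠ 0) (hc : c ≠ 0) (hy : 0 < Sg n a y) (p : ℝ) :
    hnorm n k c a (fun z => Real.log (psi n k c a s z)) y ^ (p - 2)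
        * X n k c a l (fun z => Real.log (psi n k c a s z)) y
      = c * (c ^ 2) ^ ((p - 2) / 2) * (Sg n a y ^ ((2 * k - 1) * ((p - 2) / 2) + (k - 1))
          * P n k c a s l y * hfun n k c a s y ^ (-(p / 2))) := by
  have hh := hfun_pos (k := k) (s := s) hc hy
  have hp : p / 2 = (p - 2) / 2 + 1 := by ring
  rw [hnorm_log_psi_rpow hk hc hy, X_log_psi hk hc hy, Real.div_rpow (by positivity) hh.le,
    Real.mul_rpow (by positivity) (by positivity), ← Real.rpow_mul hy.le, Real.rpow_add hy,
    Real.rpow_neg hh.le, hp, Real.rpow_add_one hh.ne']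
  field_simp

lemma pLap_log_psi (hk : k ≠ 0) (hc : c ≠ 0) {x : Pt n} (hx : 0 < Sg n a x) (p : ℝ) :
    pLap n k c a p (fun z => Real.log (psi n k c a s z)) x
      = (2 * n + 2 * k - p) * c ^ 2 * (c ^ 2) ^ ((p - 2) / 2)
          * Sg n a x ^ ((2 * k - 1) * ((p - 2) / 2) + (k - 1) + k)
          * hfun n k c a s x ^ (-(p / 2)) := by
  have hh := hfun_pos (k := k) (s := s) hc hx
  have hU : {y | 0 < Sg n a y} ∈ 𝓝 x :=
    (isOpen_lt continuous_const differentiable_Sg.continuous).mem_nhds hx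
  have hflux : ∀ l, (fun y => hnorm n k c a (fun z => Real.log (psi n k c a s z)) y ^ (p - 2)
      * X n k c a l (fun z => Real.log (psi n k c a s z)) y) =ᶠ[𝓝 x]
      fun y => c * (c ^ 2) ^ ((p - 2) / 2) * (Sg n a y ^ ((2 * k - 1) * ((p - 2) / 2) + (k - 1))
        * P n k c a s l y * hfun n k c a s y ^ (-(p / 2))) := fun l => by
    filter_upwards [hU] with y hy using flux_log_psi hk hc hy p
  rw [pLap, Finset.sum_congr rfl fun l _ => (X_congr (hflux l)).trans
    (X_const_mul _ (differentiableAt_flux hx.ne' hh.ne' _ _)), ← Finset.mul_sum,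
    sum_X_flux hx hh]
  ring

end QLaplace

theorem stmt3_general (n : ℕ) (a : Fin n ⊕ Fin n → ℝ) (s : ℝ)
    (c k : ℝ) (hc : c ≠ 0) (hk : 0 < k)
    (p Q : ℝ) (hQ : Q = 2 * n + 2 * k) (hp : p = Q)
    (x : Pt n) (hx : Sg n a x ≠ 0) :
    pLap n k c a p (fun y => Real.log (psi n k c a s y)) x = 0 := by
  rw [QLaplace.pLap_log_psi hk.ne' hc ((QLaplace.Sg_nonneg x).lt_of_ne' hx), hp, hQ, sub_self]
  simp only [zero_mul]

theorem stmt3 (n : ℕ) (hn : 1 ≤ n) (a : Fin n ⊕ Fin n → ℝ) (s : ℝ)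
    (c k : ℝ) (hc : c ≠ 0) (hk : 0 < k)
    (p Q : ℝ) (hQ : Q = 2 * n + 2 * k) (hp : p = Q)
    (x : Pt n) (hx0 : x ≠ (a, s)) (hx : Sg n a x ≠ 0) :
    pLap n k c a p (fun y => Real.log (psi n k c a s y)) x = 0 :=
  stmt3_general n a s c k hc hk p Q hQ hp x hx
end
end

section
/- Let 1 < p < ∞ with p ≠ Q and let 0 < r < R. The function u(x) = (ψ(x)^α − R^α)/(r^α − R^α) satisfies Δ_p u = 0 at every point of the annulus {x : r < ψ(x) < R} where Σ ≠ 0, together with the boundary conditions u(x) = 1 whenever ψ(x) = r and u(x) = 0 whenever ψ(x) = R. -/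
open MeasureTheory Real Filter

noncomputable section

/-!
Write `z = x' - a'` for the horizontal displacement and `J z` for its rotation by the standard
complex structure, so that `X_l = ∂_l + 2kcΣ^{k-1} (Jz)_l ∂_t`. The `X_l` are derivations with
`X_l z_m = δ_lm` and `X_l (Jz)_l = 0`, and `X_l h = 4kcΣ^{k-1} P_l` where
`P_l = cΣ^k z_l + (t - s)(Jz)_l`. Because `⟨z, Jz⟩ = 0` and `|Jz|² = Σ`, the vector `P` satisfies
`∑ P_l² = Σ h`, `∑ z_l P_l = cΣ^{k+1}` and `∑ X_l P_l = (2n + 4k)cΣ^k`.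

Since `u` is an affine function of `h^{α/4k}`, its flux `‖∇₀u‖^{p-2} X_l u` is a constant multiple
of `Σ^E h^g P_l` for explicit exponents `E, g`, and the identities above give
`Δ_p u = K c Σ^{E+k} h^g (α(p - 1) + Q - p)`, which vanishes exactly for `α = (Q - p)/(1 - p)`.
-/

theorem rpow_two_mul_eq_sq {y : ℝ} (hy : 0 ≤ y) (e : ℝ) : y ^ (2 * e) = (y ^ e) ^ 2 := by
  rw [mul_comm, ← Real.rpow_mul_natCast hy]
  norm_num

theorem rpow_mul_sub_one_add {y : ℝ} (hy : 0 < y) (e p : ℝ) :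
    y ^ ((e - 1) * (p - 1) + (p - 2) / 2)
      = (y ^ (e - 1)) ^ (p - 2) * y ^ (e - 1) * √y ^ (p - 2) := by
  rw [Real.sqrt_eq_rpow, ← Real.rpow_mul hy.le, ← Real.rpow_mul hy.le, ← Real.rpow_add hy,
    ← Real.rpow_add hy]
  ring_nf

namespace HeisenbergType

variable {n : ℕ}

def disp (a : Fin n ⊕ Fin n → ℝ) (l : Fin n ⊕ Fin n) (y : Pt n) : ℝ := y.1 l - a l

/-- `J z`, for `J` the standard complex structure on `ℝ^{2n}`. -/
def rotDisp (a : Fin n ⊕ Fin n → ℝ) (l : Fin n ⊕ Fin n) (y : Pt n) : ℝ :=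
  match l with
  | Sum.inl i => disp a (Sum.inr i) y
  | Sum.inr i => -disp a (Sum.inl i) y

def vertCoeff (k c : ℝ) (a : Fin n ⊕ Fin n → ℝ) (l : Fin n ⊕ Fin n) (y : Pt n) : ℝ :=
  2 * k * c * Sg n a y ^ (k - 1) * rotDisp a l y

section Derivation

variable {k c : ℝ} {a : Fin n ⊕ Fin n → ℝ} {l : Fin n ⊕ Fin n} {u v : Pt n → ℝ} {x : Pt n}

theorem X_eq_fderiv :
    X n k c a l u x = fderiv ℝ u x (Pi.single l 1, vertCoeff k c a l x) := by
  have hv : ((Pi.single l 1, vertCoeff k c a l x) : Pt n)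
      = (Pi.single l 1, 0) + vertCoeff k c a l x • (0, 1) := by
    simp
  rw [hv, map_add, map_smul, smul_eq_mul]
  cases l <;> simp only [X, pdx, pdt, vertCoeff, rotDisp, disp] <;> ring

theorem X_add (hu : DifferentiableAt ℝ u x) (hv : DifferentiableAt ℝ v x) :
    X n k c a l (fun y => u y + v y) x = X n k c a l u x + X n k c a l v x := by
  simp only [X_eq_fderiv, fderiv_fun_add hu hv, add_apply]

theorem X_mul (hu : DifferentiableAt ℝ u x) (hv : DifferentiableAt ℝ v x) :
    X n k c a l (fun y => u y * v y) x = u x * X n k c a l v x + v x * X n k c a l u x := by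
  simp [X_eq_fderiv, fderiv_fun_mul hu hv]

theorem X_const (K : ℝ) : X n k c a l (fun _ => K) x = 0 := by
  simp [X_eq_fderiv]

theorem X_sub_const (A : ℝ) : X n k c a l (fun y => u y - A) x = X n k c a l u x := by
  simp only [X_eq_fderiv, fderiv_sub_const]

theorem X_pow (hu : DifferentiableAt ℝ u x) (m : ℕ) :
    X n k c a l (fun y => u y ^ m) x = m * u x ^ (m - 1) * X n k c a l u x := by
  simp [X_eq_fderiv, fderiv_fun_pow m hu, mul_assoc]

theorem X_rpow_const (hu : DifferentiableAt ℝ u x) (hx : u x ≠ 0) (e : ℝ) :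
    X n k c a l (fun y => u y ^ e) x = e * u x ^ (e - 1) * X n k c a l u x := by
  simp [X_eq_fderiv, ((hu.hasFDerivAt).rpow_const (Or.inl hx)).fderiv, mul_assoc]

theorem X_sum {ι : Type*} (t : Finset ι) {f : ι → Pt n → ℝ}
    (hf : ∀ i ∈ t, DifferentiableAt ℝ (f i) x) :
    X n k c a l (fun y => ∑ i ∈ t, f i y) x = ∑ i ∈ t, X n k c a l (f i) x := by
  simp [X_eq_fderiv, fderiv_fun_sum hf]

theorem X_congr (h : u =ᶠ[nhds x] v) : X n k c a l u x = X n k c a l v x := by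
  simp only [X_eq_fderiv, h.fderiv_eq]

end Derivation

variable {k c : ℝ} {a : Fin n ⊕ Fin n → ℝ} {l : Fin n ⊕ Fin n} {x : Pt n}

theorem hasFDerivAt_disp (m : Fin n ⊕ Fin n) :
    HasFDerivAt (disp a m)
      ((ContinuousLinearMap.proj m).comp (ContinuousLinearMap.fst ℝ (Fin n ⊕ Fin n → ℝ) ℝ)) x :=
  ((ContinuousLinearMap.proj m).comp
    (ContinuousLinearMap.fst ℝ (Fin n ⊕ Fin n → ℝ) ℝ)).hasFDerivAt.sub_const (a m)

@[fun_prop]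
theorem differentiable_disp (m : Fin n ⊕ Fin n) : Differentiable ℝ (disp a m) := fun _ =>
  (hasFDerivAt_disp m).differentiableAt

theorem rotDisp_inl (i : Fin n) : rotDisp a (Sum.inl i) = disp a (Sum.inr i) := rfl

theorem rotDisp_inr (i : Fin n) : rotDisp a (Sum.inr i) = fun y => -disp a (Sum.inl i) y := rfl

@[fun_prop]
theorem differentiable_rotDisp (m : Fin n ⊕ Fin n) : Differentiable ℝ (rotDisp a m) := by
  cases m <;> unfold rotDisp <;> fun_prop

theorem Sg_eq_sum_disp_sq : Sg n a = fun y => ∑ m, disp a m y ^ 2 := rfl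

theorem sum_disp_sq (y : Pt n) : ∑ m, disp a m y ^ 2 = Sg n a y := rfl

theorem Sg_nonneg (y : Pt n) : 0 ≤ Sg n a y := Finset.sum_nonneg fun _ _ => sq_nonneg _

@[fun_prop]
theorem differentiable_Sg : Differentiable ℝ (Sg n a) := by
  rw [Sg_eq_sum_disp_sq]; fun_prop

theorem X_disp (m : Fin n ⊕ Fin n) :
    X n k c a l (disp a m) x = Pi.single (M := fun _ => ℝ) l 1 m := by
  rw [X_eq_fderiv, (hasFDerivAt_disp m).fderiv]
  rfl

theorem X_snd_sub_const (s : ℝ) : X n k c a l (fun y => y.2 - s) x = vertCoeff k c a l x := by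
  rw [X_eq_fderiv, fderiv_sub_const, fderiv_snd]
  rfl

theorem X_rotDisp_self : X n k c a l (rotDisp a l) x = 0 := by
  cases l with
  | inl i => simp [rotDisp_inl, X_disp]
  | inr i =>
    rw [rotDisp_inr, X_eq_fderiv, (hasFDerivAt_disp _).fun_neg.fderiv]
    simp

theorem X_Sg : X n k c a l (Sg n a) x = 2 * disp a l x := by
  rw [Sg_eq_sum_disp_sq, X_sum _ (fun m _ => by fun_prop)]
  simp (disch := fun_prop) [X_pow, X_disp, Pi.single_apply]

theorem sum_rotDisp_sq (y : Pt n) : ∑ l, rotDisp a l y ^ 2 = Sg n a y := by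
  simp [Sg_eq_sum_disp_sq, rotDisp, Fintype.sum_sum_type, add_comm]

theorem sum_disp_mul_rotDisp (y : Pt n) : ∑ l, disp a l y * rotDisp a l y = 0 := by
  simp [rotDisp, Fintype.sum_sum_type, mul_comm]

def P (k c : ℝ) (a : Fin n ⊕ Fin n → ℝ) (s : ℝ) (l : Fin n ⊕ Fin n) (y : Pt n) : ℝ :=
  c * disp a l y * Sg n a y ^ k + rotDisp a l y * (y.2 - s)

theorem hfun_eq (s : ℝ) :
    hfun n k c a s = fun y => c ^ 2 * Sg n a y ^ (2 * k) + (y.2 - s) ^ 2 := rfl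

theorem hfun_nonneg (s : ℝ) (y : Pt n) : 0 ≤ hfun n k c a s y := by
  have := Sg_nonneg (a := a) y
  unfold hfun; positivity

theorem hfun_pos (s : ℝ) (hc : c ≠ 0) (hS : Sg n a x ≠ 0) : 0 < hfun n k c a s x := by
  have := (Sg_nonneg (a := a) x).lt_of_ne' hS
  unfold hfun; positivity

@[fun_prop]
theorem differentiableAt_hfun (s : ℝ) (hS : Sg n a x ≠ 0) :
    DifferentiableAt ℝ (hfun n k c a s) x := by
  rw [hfun_eq]; fun_prop (disch := assumption)

@[fun_prop]
theorem differentiableAt_P (s : ℝ) (hS : Sg n a x ≠ 0) :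
    DifferentiableAt ℝ (P k c a s l) x := by
  unfold P; fun_prop (disch := assumption)

theorem X_hfun (s : ℝ) (hS : Sg n a x ≠ 0) :
    X n k c a l (hfun n k c a s) x = 4 * k * c * Sg n a x ^ (k - 1) * P k c a s l x := by
  rw [hfun_eq]
  simp (disch := first | assumption | fun_prop (disch := assumption)) only [X_add, X_mul, X_const,
    X_rpow_const, X_pow, X_Sg, X_snd_sub_const]
  simp only [P, vertCoeff, Real.rpow_sub_one hS, rpow_two_mul_eq_sq (Sg_nonneg x)]
  field_simp
  ring

theorem X_P (s : ℝ) (hS : Sg n a x ≠ 0) :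
    X n k c a l (P k c a s l) x = c * Sg n a x ^ k
      + 2 * k * c * Sg n a x ^ (k - 1) * (disp a l x ^ 2 + rotDisp a l x ^ 2) := by
  unfold P
  simp (disch := first | assumption | fun_prop (disch := assumption)) only [X_add, X_mul, X_const,
    X_rpow_const, X_Sg, X_rotDisp_self, X_snd_sub_const, X_disp, Pi.single_eq_same]
  simp only [vertCoeff]
  ring

theorem sum_disp_mul_P (s : ℝ) (y : Pt n) :
    ∑ l, disp a l y * P k c a s l y = c * Sg n a y * Sg n a y ^ k := by
  have key : ∀ l, disp a l y * P k c a s l y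
      = c * Sg n a y ^ k * disp a l y ^ 2 + (y.2 - s) * (disp a l y * rotDisp a l y) := by
    intro l; unfold P; ring
  simp only [key, Finset.sum_add_distrib, ← Finset.mul_sum, sum_disp_mul_rotDisp,
    sum_disp_sq]
  ring

theorem sum_P_sq (s : ℝ) (y : Pt n) : ∑ l, P k c a s l y ^ 2 = Sg n a y * hfun n k c a s y := by
  have key : ∀ l, P k c a s l y ^ 2 = (c * Sg n a y ^ k) ^ 2 * disp a l y ^ 2
      + 2 * c * Sg n a y ^ k * (y.2 - s) * (disp a l y * rotDisp a l y)
      + (y.2 - s) ^ 2 * rotDisp a l y ^ 2 := by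
    intro l; unfold P; ring
  simp only [key, Finset.sum_add_distrib, ← Finset.mul_sum, sum_disp_mul_rotDisp,
    sum_rotDisp_sq, sum_disp_sq, hfun, rpow_two_mul_eq_sq (Sg_nonneg y)]
  ring

theorem sum_X_P (s : ℝ) (hS : Sg n a x ≠ 0) :
    ∑ l, X n k c a l (P k c a s l) x = (2 * n + 4 * k) * c * Sg n a x ^ k := by
  simp only [X_P s hS, Finset.sum_add_distrib, ← Finset.mul_sum, sum_rotDisp_sq,
    sum_disp_sq, Finset.sum_const, Finset.card_univ, Fintype.card_sum, Fintype.card_fin,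
    nsmul_eq_mul]
  rw [Real.rpow_sub_one hS]
  field_simp
  push_cast
  ring

theorem sum_X_flux (s : ℝ) (hc : c ≠ 0) (hS : Sg n a x ≠ 0) (K E g : ℝ) :
    ∑ l, X n k c a l (fun y => K * (Sg n a y ^ E * (hfun n k c a s y ^ g * P k c a s l y))) x
      = K * c * Sg n a x ^ E * Sg n a x ^ k * hfun n k c a s x ^ g
        * (2 * E + 4 * k * g + 2 * n + 4 * k) := by
  have hh : hfun n k c a s x ≠ 0 := (hfun_pos s hc hS).ne'
  have key : ∀ l, X n k c a l
      (fun y => K * (Sg n a y ^ E * (hfun n k c a s y ^ g * P k c a s l y))) x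
      = K * Sg n a x ^ E * hfun n k c a s x ^ g * X n k c a l (P k c a s l) x
        + 4 * K * k * c * g * Sg n a x ^ E * Sg n a x ^ (k - 1) * hfun n k c a s x ^ (g - 1)
          * P k c a s l x ^ 2
        + 2 * K * E * Sg n a x ^ (E - 1) * hfun n k c a s x ^ g * (disp a l x * P k c a s l x) := by
    intro l
    simp (disch := first | assumption | fun_prop (disch := assumption)) only [X_mul, X_const,
      X_rpow_const, X_Sg, X_hfun s hS]
    ring
  simp only [key, Finset.sum_add_distrib, ← Finset.mul_sum, sum_X_P s hS, sum_P_sq,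
    sum_disp_mul_P]
  simp only [Real.rpow_sub_one hS, Real.rpow_sub_one hh]
  field_simp
  ring

theorem psi_rpow (s α : ℝ) (y : Pt n) :
    psi n k c a s y ^ α = hfun n k c a s y ^ (α / (4 * k)) := by
  rw [psi, ← Real.rpow_mul (hfun_nonneg s y)]
  ring_nf

theorem X_u (s : ℝ) (hk : k ≠ 0) (hc : c ≠ 0) (hS : Sg n a x ≠ 0) (α A B : ℝ) :
    X n k c a l (fun y => (psi n k c a s y ^ α - A) / B) x
      = α * c / B * (hfun n k c a s x ^ (α / (4 * k) - 1) * Sg n a x ^ (k - 1))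
        * P k c a s l x := by
  have hh : hfun n k c a s x ≠ 0 := (hfun_pos s hc hS).ne'
  have hu : (fun y => (psi n k c a s y ^ α - A) / B)
      = fun y => B⁻¹ * (hfun n k c a s y ^ (α / (4 * k)) - A) := by
    ext y; rw [psi_rpow]; ring
  rw [hu]
  simp (disch := first | assumption | fun_prop (disch := assumption)) only [X_mul, X_const,
    X_sub_const, X_rpow_const, X_hfun s hS]
  field_simp
  ring

theorem hnorm_u (s : ℝ) (hk : k ≠ 0) (hc : c ≠ 0) (hS : Sg n a x ≠ 0) (α A B : ℝ) :
    hnorm n k c a (fun y => (psi n k c a s y ^ α - A) / B) x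
      = |α * c / B| * (hfun n k c a s x ^ (α / (4 * k) - 1) * Sg n a x ^ (k - 1))
        * √(Sg n a x * hfun n k c a s x) := by
  have hm : 0 < hfun n k c a s x ^ (α / (4 * k) - 1) * Sg n a x ^ (k - 1) := by
    have := (Sg_nonneg (a := a) x).lt_of_ne' hS
    have := hfun_pos (k := k) s hc hS
    positivity
  simp only [hnorm, X_u s hk hc hS, mul_pow _ (P k c a s _ x), ← Finset.mul_sum, sum_P_sq,
    Real.sqrt_mul (sq_nonneg _), Real.sqrt_sq_eq_abs, abs_mul, abs_of_pos hm]

theorem hnorm_rpow_mul_X_u (s : ℝ) (hk : k ≠ 0) (hc : c ≠ 0) (hS : Sg n a x ≠ 0)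
    (p α A B : ℝ) :
    hnorm n k c a (fun y => (psi n k c a s y ^ α - A) / B) x ^ (p - 2)
        * X n k c a l (fun y => (psi n k c a s y ^ α - A) / B) x
      = |α * c / B| ^ (p - 2) * (α * c / B)
        * (Sg n a x ^ ((k - 1) * (p - 1) + (p - 2) / 2)
          * (hfun n k c a s x ^ ((α / (4 * k) - 1) * (p - 1) + (p - 2) / 2) * P k c a s l x)) := by
  have hSpos := (Sg_nonneg (a := a) x).lt_of_ne' hS
  have hh := hfun_pos (k := k) s hc hS
  rw [hnorm_u s hk hc hS, X_u s hk hc hS, rpow_mul_sub_one_add hSpos, rpow_mul_sub_one_add hh,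
    Real.sqrt_mul hSpos.le, Real.mul_rpow (by positivity) (by positivity),
    Real.mul_rpow (by positivity) (by positivity), Real.mul_rpow (by positivity) (by positivity),
    Real.mul_rpow (by positivity) (by positivity)]
  ring

theorem pLap_u (s : ℝ) (hk : k ≠ 0) (hc : c ≠ 0) (hS : Sg n a x ≠ 0) (p α A B : ℝ) :
    pLap n k c a p (fun y => (psi n k c a s y ^ α - A) / B) x
      = |α * c / B| ^ (p - 2) * (α * c / B) * c * Sg n a x ^ ((k - 1) * (p - 1) + (p - 2) / 2)
        * Sg n a x ^ k * hfun n k c a s x ^ ((α / (4 * k) - 1) * (p - 1) + (p - 2) / 2)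
        * (α * (p - 1) + 2 * n + 2 * k - p) := by
  have hnhds : ∀ᶠ y in nhds x, Sg n a y ≠ 0 :=
    (isOpen_ne_fun differentiable_Sg.continuous continuous_const).mem_nhds hS
  have hflux : ∀ l, X n k c a l (fun y =>
      hnorm n k c a (fun y => (psi n k c a s y ^ α - A) / B) y ^ (p - 2)
        * X n k c a l (fun y => (psi n k c a s y ^ α - A) / B) y) x
      = X n k c a l (fun y => |α * c / B| ^ (p - 2) * (α * c / B)
        * (Sg n a y ^ ((k - 1) * (p - 1) + (p - 2) / 2)
          * (hfun n k c a s y ^ ((α / (4 * k) - 1) * (p - 1) + (p - 2) / 2) * P k c a s l y))) x :=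
    fun l => X_congr (hnhds.mono fun y hy => hnorm_rpow_mul_X_u s hk hc hy p α A B)
  rw [pLap, Finset.sum_congr rfl fun l _ => hflux l, sum_X_flux s hc hS]
  field_simp
  ring

end HeisenbergType

theorem stmt14_general (n : ℕ) (a : Fin n ⊕ Fin n → ℝ) (s : ℝ)
    (c k : ℝ) (hc : c ≠ 0) (hk : 0 < k)
    (p Q α : ℝ) (hp : 1 < p) (hQ : Q = 2 * n + 2 * k) (hpQ : p ≠ Q)
    (hα : α = (Q - p) / (1 - p)) (r R : ℝ) (hr : 0 < r) (hrR : r < R) :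
    (∀ x : Pt n, r < psi n k c a s x → psi n k c a s x < R → Sg n a x ≠ 0 →
      pLap n k c a p
        (fun y => (psi n k c a s y ^ α - R ^ α) / (r ^ α - R ^ α)) x = 0)
    ∧ (∀ x : Pt n, psi n k c a s x = r →
        (psi n k c a s x ^ α - R ^ α) / (r ^ α - R ^ α) = 1)
    ∧ (∀ x : Pt n, psi n k c a s x = R →
        (psi n k c a s x ^ α - R ^ α) / (r ^ α - R ^ α) = 0) := by
  have h1p : 1 - p ≠ 0 := by linarith
  have hα_root : α * (p - 1) + 2 * n + 2 * k - p = 0 := by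
    rw [hα, hQ]; field_simp; ring
  have hα0 : α ≠ 0 := by
    rw [hα]; exact div_ne_zero (sub_ne_zero.2 hpQ.symm) h1p
  have hrR_ne : r ^ α - R ^ α ≠ 0 := by
    rcases hα0.lt_or_gt with hneg | hpos
    · exact sub_ne_zero.2 (Real.rpow_lt_rpow_of_neg hr hrR hneg).ne'
    · exact sub_ne_zero.2 (Real.rpow_lt_rpow hr.le hrR hpos).ne
  refine ⟨fun x _ _ hS => ?_, fun x hx => by rw [hx, div_self hrR_ne],
    fun x hx => by rw [hx, sub_self, zero_div]⟩
  rw [HeisenbergType.pLap_u s hk.ne' hc hS, hα_root, mul_zero]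

theorem stmt14 (n : ℕ) (hn : 1 ≤ n) (a : Fin n ⊕ Fin n → ℝ) (s : ℝ)
    (c k : ℝ) (hc : c ≠ 0) (hk : 0 < k)
    (p Q α : ℝ) (hp : 1 < p) (hQ : Q = 2 * n + 2 * k) (hpQ : p ≠ Q)
    (hα : α = (Q - p) / (1 - p)) (r R : ℝ) (hr : 0 < r) (hrR : r < R) :
    (∀ x : Pt n, r < psi n k c a s x → psi n k c a s x < R → Sg n a x ≠ 0 →
      pLap n k c a p
        (fun y => (psi n k c a s y ^ α - R ^ α) / (r ^ α - R ^ α)) x = 0)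
    ∧ (∀ x : Pt n, psi n k c a s x = r →
        (psi n k c a s x ^ α - R ^ α) / (r ^ α - R ^ α) = 1)
    ∧ (∀ x : Pt n, psi n k c a s x = R →
        (psi n k c a s x ^ α - R ^ α) / (r ^ α - R ^ α) = 0) :=
  stmt14_general n a s c k hc hk p Q α hp hQ hpQ hα r R hr hrR
end
end
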